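/- Let γ ∈ (0,1), let E_0, E_1, ... be a sequence of events in a probability space, let δ > 0 and T₀ a natural number. If ∑_{t=0}^{∞} γ^t P(E_t) ≥ 1/(1−γ) − γ^{T₀}·δ, then P(⋂_{t=0}^{T₀} E_t) ≥ 1 − δ. -/
import Mathlib


open MeasureTheory

theorem stmt_2 {Ω : Type*} [MeasurableSpace Ω] (μ : Measure Ω) [IsProbabilityMeasure μ]
    (γ : ℝ) (hγ : γ ∈ Set.Ioo (0 : ℝ) 1)
    (E : ℕ → Set Ω) (hE : ∀ t, MeasurableSet (E t))
    (δ : ℝ) (hδ : 0 < δ) (T₀ : ℕ)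
    (hsum : 1 / (1 - γ) - γ ^ T₀ * δ ≤ ∑' t : ℕ, γ ^ t * (μ (E t)).toReal) :
    1 - δ ≤ (μ (⋂ t ∈ Finset.range (T₀ + 1), E t)).toReal := by
  obtain ⟨hγ0, hγ1⟩ := hγ
  set a : ℕ → ℝ := fun t => (μ (E t)).toReal with ha
  have ha0 : ∀ t, 0 ≤ a t := fun t => ENNReal.toReal_nonneg
  have ha1 : ∀ t, a t ≤ 1 := by
    intro t
    have h := prob_le_one (μ := μ) (s := E t)
    have := ENNReal.toReal_mono (by simp) h
    simpa using this
  have hgeo : Summable (fun t : ℕ => γ ^ t) :=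
    summable_geometric_of_lt_one hγ0.le hγ1
  have hS : Summable (fun t : ℕ => γ ^ t * a t) := by
    apply Summable.of_nonneg_of_le (fun t => by positivity)
      (fun t => ?_) hgeo
    nlinarith [ha1 t, pow_pos hγ0 t]
  have hdiff : Summable (fun t : ℕ => γ ^ t * (1 - a t)) := by
    have := hgeo.sub hS
    simpa [mul_sub] using this
  have htsum_geo : ∑' t : ℕ, γ ^ t = 1 / (1 - γ) := by
    rw [tsum_geometric_of_lt_one hγ0.le hγ1, one_div]
  have hkey : ∑' t : ℕ, γ ^ t * (1 - a t) ≤ γ ^ T₀ * δ := by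
    have : ∑' t : ℕ, γ ^ t * (1 - a t)
        = (∑' t : ℕ, γ ^ t) - ∑' t : ℕ, γ ^ t * a t := by
      rw [← Summable.tsum_sub hgeo hS]
      congr 1; ext t; ring
    rw [this, htsum_geo]
    linarith
  have hfin : ∑ t ∈ Finset.range (T₀ + 1), γ ^ t * (1 - a t)
      ≤ γ ^ T₀ * δ := by
    refine le_trans ?_ hkey
    apply Summable.sum_le_tsum _ (fun t _ => ?_) hdiff
    have := ha1 t
    have := pow_nonneg hγ0.le t
    nlinarith
  have hlow : γ ^ T₀ * ∑ t ∈ Finset.range (T₀ + 1), (1 - a t)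
      ≤ ∑ t ∈ Finset.range (T₀ + 1), γ ^ t * (1 - a t) := by
    rw [Finset.mul_sum]
    apply Finset.sum_le_sum
    intro t ht
    have ht' : t ≤ T₀ := Nat.lt_succ_iff.mp (Finset.mem_range.mp ht)
    have hpow : γ ^ T₀ ≤ γ ^ t := pow_le_pow_of_le_one hγ0.le hγ1.le ht'
    have := ha1 t
    nlinarith
  have hsumδ : ∑ t ∈ Finset.range (T₀ + 1), (1 - a t) ≤ δ := by
    have hpos : 0 < γ ^ T₀ := pow_pos hγ0 T₀
    nlinarith [hlow, hfin]
  -- measure part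
  set S : Set Ω := ⋂ t ∈ Finset.range (T₀ + 1), E t with hSdef
  have hSmeas : MeasurableSet S :=
    Finset.measurableSet_biInter _ (fun t _ => hE t)
  have hcompl : (μ Sᶜ).toReal = 1 - (μ S).toReal := by
    rw [prob_compl_eq_one_sub hSmeas]
    rw [ENNReal.toReal_sub_of_le (prob_le_one) (by norm_num)]
    simp
  have hunion : μ Sᶜ ≤ ∑ t ∈ Finset.range (T₀ + 1), μ (E t)ᶜ := by
    have : Sᶜ = ⋃ t ∈ Finset.range (T₀ + 1), (E t)ᶜ := by
      simp [hSdef, Set.compl_iInter]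
    rw [this]
    exact measure_biUnion_finset_le _ _
  have hunion' : (μ Sᶜ).toReal ≤ ∑ t ∈ Finset.range (T₀ + 1), (1 - a t) := by
    calc (μ Sᶜ).toReal ≤ (∑ t ∈ Finset.range (T₀ + 1), μ (E t)ᶜ).toReal := by
          apply ENNReal.toReal_mono _ hunion
          refine (ENNReal.sum_lt_top.mpr fun t _ => measure_lt_top μ _).ne
      _ = ∑ t ∈ Finset.range (T₀ + 1), (1 - a t) := by
          rw [ENNReal.toReal_sum (fun t _ => (measure_lt_top μ _).ne)]
          apply Finset.sum_congr rfl
          intro t _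
          rw [prob_compl_eq_one_sub (hE t),
            ENNReal.toReal_sub_of_le (prob_le_one) (by norm_num)]
          simp [ha]
  rw [hcompl] at hunion'
  linarith
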